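/- arXiv:1908.02115 — 9 statements merged into one kernel-verified Lean document; each statement's English description precedes it below -/
import Mathlib

section
/- Let (X,d) be a cone metric space and I an admissible ideal on ℕ. A sequence x = {x_n} in X is I-bounded if and only if there exists r ∈ E with 0 ≪ r or r = 0 such that the rough I-limit set I-LIM^r x is nonempty. -/
open Set Pointwise

/-- A cone in a real Banach space `E`. -/
structure IsCone {E : Type*} [NormedAddCommGroup E] [NormedSpace ℝ E] (P : Set E) : Prop where
  closed : IsClosed P
  nonempty : P.Nonempty
  ne_zero : P ≠ {0}
  smul_add_mem : ∀ a b : ℝ, 0 ≤ a → 0 ≤ b → ∀ x y : E, x ∈ P → y ∈ P → a • x + b • y ∈ P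
  eq_zero_of_mem_neg_mem : ∀ x : E, x ∈ P → -x ∈ P → x = 0

/-- `d` is a cone metric on `X` with values in `E`, relative to the cone `P`. -/
structure IsConeMetric {X : Type*} {E : Type*} [NormedAddCommGroup E] [NormedSpace ℝ E]
    (P : Set E) (d : X → X → E) : Prop where
  cone : IsCone P
  intP_nonempty : (interior P).Nonempty
  mem_cone : ∀ x y : X, d x y ∈ P
  eq_zero_iff : ∀ x y : X, d x y = 0 ↔ x = y
  symm : ∀ x y : X, d x y = d y x
  triangle : ∀ x y z : X, d x z + d z y - d x y ∈ P

/-- An admissible ideal on ℕ. -/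
structure AdmissibleIdeal (I : Set (Set ℕ)) : Prop where
  union_mem : ∀ A B : Set ℕ, A ∈ I → B ∈ I → A ∪ B ∈ I
  subset_mem : ∀ A B : Set ℕ, B ⊆ A → A ∈ I → B ∈ I
  univ_not_mem : (Set.univ : Set ℕ) ∉ I
  singleton_mem : ∀ n : ℕ, ({n} : Set ℕ) ∈ I

/-- The (AP) condition for an ideal on ℕ. -/
def HasAP (I : Set (Set ℕ)) : Prop :=
  ∀ A : ℕ → Set ℕ, (∀ i, A i ∈ I) → (∀ i j, i ≠ j → Disjoint (A i) (A j)) →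
    ∃ B : ℕ → Set ℕ, (∀ i, (symmDiff (A i) (B i)).Finite) ∧ (⋃ j, B j) ∈ I

/-- Rough convergence of degree `r` of a sequence to `l` in a cone metric space. -/
def RoughConv {X : Type*} {E : Type*} [NormedAddCommGroup E] [NormedSpace ℝ E]
    (P : Set E) (d : X → X → E) (x : ℕ → X) (r : E) (l : X) : Prop :=
  ∀ ε ∈ interior P, ∃ m : ℕ, ∀ n ≥ m, (r + ε) - d (x n) l ∈ interior P

/-- Rough `I`-convergence of degree `r` of a sequence to `l` in a cone metric space. -/
def RoughIConv {X : Type*} {E : Type*} [NormedAddCommGroup E] [NormedSpace ℝ E]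
    (P : Set E) (d : X → X → E) (I : Set (Set ℕ)) (x : ℕ → X) (r : E) (l : X) : Prop :=
  ∀ ε ∈ interior P, {n : ℕ | (r + ε) - d (x n) l ∉ interior P} ∈ I

/-- Rough `I*`-convergence of degree `r` of a sequence to `l` in a cone metric space:
there is a set `M` in the filter associated to `I` along which the sequence is
rough convergent of degree `r` to `l`. -/
def RoughIStarConv {X : Type*} {E : Type*} [NormedAddCommGroup E] [NormedSpace ℝ E]
    (P : Set E) (d : X → X → E) (I : Set (Set ℕ)) (x : ℕ → X) (r : E) (l : X) : Prop :=
  ∃ M : Set ℕ, Mᶜ ∈ I ∧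
    ∀ ε ∈ interior P, ∃ p : ℕ, ∀ n ∈ M, n ≥ p → (r + ε) - d (x n) l ∈ interior P

/-- `I`-convergence of a sequence to `l` in a cone metric space. -/
def IConv {X : Type*} {E : Type*} [NormedAddCommGroup E] [NormedSpace ℝ E]
    (P : Set E) (d : X → X → E) (I : Set (Set ℕ)) (x : ℕ → X) (l : X) : Prop :=
  ∀ ε ∈ interior P, {n : ℕ | ε - d (x n) l ∉ interior P} ∈ I

/-- A bounded sequence in a cone metric space. -/
def ConeBounded {X : Type*} {E : Type*} [NormedAddCommGroup E] [NormedSpace ℝ E]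
    (P : Set E) (d : X → X → E) (x : ℕ → X) : Prop :=
  ∃ y : X, ∃ M ∈ interior P, ∀ n : ℕ, M - d (x n) y ∈ interior P

/-- An `I`-bounded sequence in a cone metric space. -/
def IBounded {X : Type*} {E : Type*} [NormedAddCommGroup E] [NormedSpace ℝ E]
    (P : Set E) (d : X → X → E) (I : Set (Set ℕ)) (x : ℕ → X) : Prop :=
  ∃ y : X, ∃ M ∈ interior P, {n : ℕ | M - d (x n) y ∉ interior P} ∈ I

/-- `c` is an `I`-cluster point of the sequence `x`. -/
def IClusterPt {X : Type*} {E : Type*} [NormedAddCommGroup E] [NormedSpace ℝ E]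
    (P : Set E) (d : X → X → E) (I : Set (Set ℕ)) (x : ℕ → X) (c : X) : Prop :=
  ∀ ε ∈ interior P, {k : ℕ | ε - d (x k) c ∈ interior P} ∉ I

/-- `P` is a normal cone with normal constant `K`. -/
def IsNormalConeWith {E : Type*} [NormedAddCommGroup E] [NormedSpace ℝ E]
    (P : Set E) (K : ℝ) : Prop :=
  0 < K ∧ ∀ x y : E, x ∈ P → y - x ∈ P → ‖x‖ ≤ K * ‖y‖

lemma intP_add_mem {E : Type*} [NormedAddCommGroup E] [NormedSpace ℝ E] {P : Set E}
    (hP : IsCone P) {a b : E} (ha : a ∈ interior P) (hb : b ∈ P) : a + b ∈ interior P := by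
  have hsub : (interior P) + ({b} : Set E) ⊆ P := by
    rintro z ⟨u, hu, v, hv, rfl⟩
    rw [Set.mem_singleton_iff] at hv
    subst hv
    have := hP.smul_add_mem 1 1 zero_le_one zero_le_one u v (interior_subset hu) hb
    simpa using this
  have hopen : IsOpen ((interior P) + ({b} : Set E)) := isOpen_interior.add_right
  exact interior_maximal hsub hopen (Set.add_mem_add ha (Set.mem_singleton b))

theorem stmt4 {X E : Type*} [NormedAddCommGroup E] [NormedSpace ℝ E] [CompleteSpace E]
    (P : Set E) (d : X → X → E) (hd : IsConeMetric P d)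
    (I : Set (Set ℕ)) (hI : AdmissibleIdeal I) (x : ℕ → X) :
    IBounded P d I x ↔
      ∃ r : E, (r ∈ interior P ∨ r = 0) ∧ ∃ xstar : X, RoughIConv P d I x r xstar := by
  constructor
  · rintro ⟨y, M, hM, hS⟩
    refine ⟨M, Or.inl hM, y, fun ε hε => ?_⟩
    refine hI.subset_mem _ _ (fun n hn => ?_) hS
    simp only [Set.mem_setOf_eq] at hn ⊢
    intro h
    apply hn
    have : (M - d (x n) y) + ε ∈ interior P := intP_add_mem hd.cone h (interior_subset hε)
    convert this using 1
    abel
  · rintro ⟨r, hr, xstar, hconv⟩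
    obtain ⟨ε, hε⟩ := hd.intP_nonempty
    refine ⟨xstar, r + ε, ?_, hconv ε hε⟩
    rcases hr with hr | rfl
    · have := intP_add_mem hd.cone hε (interior_subset hr)
      simpa [add_comm] using this
    · simpa using hε
end

section
/- Let {x_n} be a sequence in a cone metric space (X,d) which is I-convergent to x, and let {y_n} be another sequence in X such that d(x_n, y_n) ≤ r for some 0 ≪ r ∈ E and all n ∈ ℕ. Then {y_n} is rough I-convergent of roughness degree r to x. -/
open Set

lemma mem_add_interior {E : Type*} [NormedAddCommGroup E] [NormedSpace ℝ E]
    {P : Set E} (hP : IsCone P) {a b : E} (ha : a ∈ P) (hb : b ∈ interior P) :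
    a + b ∈ interior P := by
  have hopen : IsOpen ((a + ·) '' interior P) :=
    (isOpenMap_add_left a) _ isOpen_interior
  have hsub : (a + ·) '' interior P ⊆ P := by
    rintro _ ⟨z, hz, rfl⟩
    have := hP.smul_add_mem 1 1 zero_le_one zero_le_one a z ha (interior_subset hz)
    simpa using this
  exact interior_maximal hsub hopen ⟨b, hb, rfl⟩

theorem stmt6 {X E : Type*} [NormedAddCommGroup E] [NormedSpace ℝ E] [CompleteSpace E]
    (P : Set E) (d : X → X → E) (hd : IsConeMetric P d)
    (I : Set (Set ℕ)) (hI : AdmissibleIdeal I)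
    (x y : ℕ → X) (l : X) (hx : IConv P d I x l)
    (r : E) (hr : r ∈ interior P) (hxy : ∀ n : ℕ, r - d (x n) (y n) ∈ P) :
    RoughIConv P d I y r l := by
  intro ε hε
  refine hI.subset_mem _ _ ?_ (hx ε hε)
  intro n hn
  simp only [Set.mem_setOf_eq] at hn ⊢
  intro hxn
  apply hn
  have htri : d (y n) (x n) + d (x n) l - d (y n) l ∈ P := hd.triangle (y n) l (x n)
  have h1 : (r - d (x n) (y n)) + (d (y n) (x n) + d (x n) l - d (y n) l) ∈ P := by
    have := hd.cone.smul_add_mem 1 1 zero_le_one zero_le_one _ _ (hxy n) htri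
    simpa using this
  have h2 := mem_add_interior hd.cone h1 hxn
  have hsymm : d (y n) (x n) = d (x n) (y n) := hd.symm _ _
  rw [hsymm] at h2
  convert h2 using 1
  abel
end

section
/- Let {x_n} be a sequence in a cone metric space (X,d) which is rough I-convergent of roughness degree r for some 0 ≪ r ∈ E. Then there do not exist y, z ∈ I-LIM^r x and a real number m > 2 such that m·r < d(y,z). -/
open Set

section Aux
variable {E : Type*} [NormedAddCommGroup E] [NormedSpace ℝ E] {P : Set E}

lemma IsCone.zero_mem (hP : IsCone P) : (0 : E) ∈ P := by
  obtain ⟨x, hx⟩ := hP.nonempty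
  have := hP.smul_add_mem 0 0 le_rfl le_rfl x x hx hx
  simpa using this

lemma IsCone.add_mem (hP : IsCone P) {a b : E} (ha : a ∈ P) (hb : b ∈ P) : a + b ∈ P := by
  have := hP.smul_add_mem 1 1 zero_le_one zero_le_one a b ha hb
  simpa using this

lemma IsCone.int_add_mem (hP : IsCone P) {a b : E} (ha : a ∈ interior P) (hb : b ∈ P) :
    a + b ∈ interior P := by
  have hopen : IsOpen ((· + b) '' interior P) :=
    (isOpenMap_add_right b) _ isOpen_interior
  have hsub : (· + b) '' interior P ⊆ P := by
    rintro _ ⟨u, hu, rfl⟩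
    exact hP.add_mem (interior_subset hu) hb
  exact interior_maximal hsub hopen ⟨a, ha, rfl⟩

lemma IsCone.smul_int_mem (hP : IsCone P) {c : ℝ} (hc : 0 < c) {a : E}
    (ha : a ∈ interior P) : c • a ∈ interior P := by
  have hopen : IsOpen ((c • ·) '' interior P) :=
    (isOpenMap_smul₀ (ne_of_gt hc)) _ isOpen_interior
  have hsub : (c • ·) '' interior P ⊆ P := by
    rintro _ ⟨u, hu, rfl⟩
    have := hP.smul_add_mem c 0 hc.le le_rfl u u (interior_subset hu) (interior_subset hu)
    simpa using this
  exact interior_maximal hsub hopen ⟨a, ha, rfl⟩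

lemma IsCone.zero_not_int (hP : IsCone P) : (0 : E) ∉ interior P := by
  intro h0
  obtain ⟨δ, hδ, hball⟩ := Metric.mem_nhds_iff.mp (mem_interior_iff_mem_nhds.mp h0)
  have hall : ∀ v : E, v = 0 := by
    intro v
    by_contra hv
    set w : E := (δ / (2 * ‖v‖)) • v with hw
    have hnv : (0:ℝ) < ‖v‖ := norm_pos_iff.mpr hv
    have hcpos : (0:ℝ) < δ / (2 * ‖v‖) := div_pos hδ (by linarith)
    have hwnorm : ‖w‖ < δ := by
      rw [hw, norm_smul, Real.norm_eq_abs, abs_of_pos hcpos]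
      rw [div_mul_eq_mul_div, mul_comm]
      rw [div_lt_iff₀ (by linarith)]
      nlinarith
    have hw1 : w ∈ P := hball (by simpa [Metric.mem_ball] using hwnorm)
    have hw2 : -w ∈ P := hball (by simpa [Metric.mem_ball] using hwnorm)
    have : w = 0 := hP.eq_zero_of_mem_neg_mem w hw1 hw2
    rw [hw] at this
    exact hv ((smul_eq_zero.mp this).resolve_left (ne_of_gt hcpos))
  apply hP.ne_zero
  ext v
  simp [hall v, hP.zero_mem]

end Aux

theorem stmt7 {X E : Type*} [NormedAddCommGroup E] [NormedSpace ℝ E] [CompleteSpace E]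
    (P : Set E) (d : X → X → E) (hd : IsConeMetric P d)
    (I : Set (Set ℕ)) (hI : AdmissibleIdeal I)
    (x : ℕ → X) (r : E) (hr : r ∈ interior P)
    (hconv : ∃ l : X, RoughIConv P d I x r l) :
    ¬ ∃ (y z : X) (m : ℝ), RoughIConv P d I x r y ∧ RoughIConv P d I x r z ∧
      2 < m ∧ d y z - m • r ∈ P ∧ m • r ≠ d y z := by
  rintro ⟨y, z, m, hy, hz, hm, hle, hne⟩
  have hP := hd.cone
  -- choose ε = ((m-2)/2) • r
  set ε : E := ((m - 2) / 2) • r with hε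
  have hεint : ε ∈ interior P := hP.smul_int_mem (by linarith) hr
  have hAy := hy ε hεint
  have hAz := hz ε hεint
  have hU := hI.union_mem _ _ hAy hAz
  have hne' : ({n : ℕ | (r + ε) - d (x n) y ∉ interior P} ∪
      {n : ℕ | (r + ε) - d (x n) z ∉ interior P}) ≠ Set.univ := by
    intro h
    exact hI.univ_not_mem (h ▸ hU)
  obtain ⟨n, hn⟩ := Set.ne_univ_iff_exists_notMem _ |>.mp hne'
  simp only [Set.mem_union, Set.mem_setOf_eq, not_or, not_not] at hn
  obtain ⟨hny, hnz⟩ := hn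
  -- combine
  have hsum : ((r + ε) - d (x n) y) + ((r + ε) - d (x n) z) ∈ interior P :=
    hP.int_add_mem hny (interior_subset hnz)
  have htri : d y (x n) + d (x n) z - d y z ∈ P := hd.triangle y z (x n)
  have key : m • r - d y z ∈ interior P := by
    have := hP.int_add_mem hsum htri
    have heq : ((r + ε) - d (x n) y) + ((r + ε) - d (x n) z) +
        (d y (x n) + d (x n) z - d y z) = m • r - d y z := by
      rw [hd.symm y (x n), hε]
      module
    rwa [heq] at this
  have : (0 : E) ∈ interior P := by
    have := hP.int_add_mem key hle
    simpa using this
  exact hP.zero_not_int this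
end

section
/- Let (X,d) be a cone metric space, c ∈ X, and 0 ≪ r ∈ E such that for every x ∈ X either d(x,c) ≤ r or r ≪ d(x,c). If c is an I-cluster point of a sequence {x_n}, then I-LIM^r x ⊆ closed ball {x ∈ X : d(x,c) ≤ r}. -/
open Set

open Topology Filter in
theorem stmt9 {X E : Type*} [NormedAddCommGroup E] [NormedSpace ℝ E] [CompleteSpace E]
    (P : Set E) (d : X → X → E) (hd : IsConeMetric P d)
    (I : Set (Set ℕ)) (hI : AdmissibleIdeal I)
    (x : ℕ → X) (c : X) (r : E) (hr : r ∈ interior P)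
    (hdich : ∀ z : X, r - d z c ∈ P ∨ d z c - r ∈ interior P)
    (hc : IClusterPt P d I x c) :
    {l : X | RoughIConv P d I x r l} ⊆ {z : X | r - d z c ∈ P} := by
  intro l hl
  rcases hdich l with h | h
  · exact h
  exfalso
  -- basic facts about the cone
  have h0P : (0:E) ∈ P := by
    obtain ⟨p, hp⟩ := hd.cone.nonempty
    have := hd.cone.smul_add_mem 0 0 le_rfl le_rfl p p hp hp
    simpa using this
  have haddP : ∀ a b : E, a ∈ P → b ∈ P → a + b ∈ P := fun a b ha hb => by
    have := hd.cone.smul_add_mem 1 1 zero_le_one zero_le_one a b ha hb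
    simpa using this
  have hintadd : ∀ a b : E, a ∈ interior P → b ∈ P → a + b ∈ interior P := by
    intro a b ha hb
    have h1 : P ∈ 𝓝 a := mem_interior_iff_mem_nhds.mp ha
    have ht : Filter.Tendsto (fun y : E => y - b) (𝓝 (a + b)) (𝓝 a) := by
      simpa using (Filter.tendsto_id (x := 𝓝 (a + b))).sub_const b
    have h2 : (fun y : E => y - b) ⁻¹' P ∈ 𝓝 (a + b) := ht h1
    refine mem_interior_iff_mem_nhds.mpr (Filter.mem_of_superset h2 ?_)
    intro y hy
    have := haddP _ _ hy hb
    simpa using this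
  have h0notint : (0:E) ∉ interior P := by
    intro h0
    obtain ⟨δ, hδ, hball⟩ := Metric.mem_nhds_iff.mp (mem_interior_iff_mem_nhds.mp h0)
    have hz : ∀ y : E, ‖y‖ < δ → y = 0 := by
      intro y hy
      have hyP : y ∈ P := hball (by simpa [Metric.mem_ball, dist_eq_norm] using hy)
      have hynP : -y ∈ P := hball (by simpa [Metric.mem_ball, dist_eq_norm] using hy)
      exact hd.cone.eq_zero_of_mem_neg_mem y hyP hynP
    have hEtriv : ∀ y : E, y = 0 := by
      intro y
      rcases eq_or_ne y 0 with rfl | hy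
      · rfl
      have hpos : 0 < ‖y‖ := norm_pos_iff.mpr hy
      have h1 : ‖(δ / (2 * ‖y‖)) • y‖ < δ := by
        rw [norm_smul, Real.norm_eq_abs]
        have : |δ / (2 * ‖y‖)| = δ / (2 * ‖y‖) := abs_of_pos (by positivity)
        rw [this]
        rw [div_mul_eq_mul_div, mul_comm]
        rw [div_lt_iff₀ (by positivity)]
        nlinarith
      have := hz _ h1
      have hne : (δ / (2 * ‖y‖)) ≠ 0 := by positivity
      exact absurd (smul_eq_zero.mp this) (by simp [hne, hy])
    apply hd.cone.ne_zero
    ext y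
    simp [hEtriv y, h0P]
  have hhalf : ∀ v ∈ interior P, (2:ℝ)⁻¹ • v ∈ interior P := by
    intro v hv
    have h1 : P ∈ 𝓝 v := mem_interior_iff_mem_nhds.mp hv
    have ht : Filter.Tendsto (fun y : E => (2:ℝ) • y) (𝓝 ((2:ℝ)⁻¹ • v)) (𝓝 v) := by
      have := (Filter.tendsto_id (x := 𝓝 ((2:ℝ)⁻¹ • v))).const_smul (2:ℝ)
      simpa [smul_smul] using this
    have h2 : (fun y : E => (2:ℝ) • y) ⁻¹' P ∈ 𝓝 ((2:ℝ)⁻¹ • v) := ht h1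
    refine mem_interior_iff_mem_nhds.mpr (Filter.mem_of_superset h2 ?_)
    intro y hy
    have := hd.cone.smul_add_mem (2:ℝ)⁻¹ 0 (by norm_num) le_rfl _ 0 hy h0P
    simpa [smul_smul] using this
  -- set up ε
  set ε : E := (2:ℝ)⁻¹ • (d l c - r) with hεdef
  have hε : ε ∈ interior P := hhalf _ h
  have hεε : ε + ε = d l c - r := by
    rw [hεdef, ← add_smul]; norm_num
  -- find a common index
  have hA : {n : ℕ | (r + ε) - d (x n) l ∉ interior P} ∈ I := hl ε hε
  have hB : {k : ℕ | ε - d (x k) c ∈ interior P} ∉ I := hc ε hε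
  have hns : ¬ ({k : ℕ | ε - d (x k) c ∈ interior P} ⊆
      {n : ℕ | (r + ε) - d (x n) l ∉ interior P}) := by
    intro hsub
    exact hB (hI.subset_mem _ _ hsub hA)
  obtain ⟨k, hk1, hk2⟩ := not_subset.mp hns
  simp only [Set.mem_setOf_eq, not_not] at hk1 hk2
  -- derive 0 ∈ interior P
  have t1 : (r + ε) - d l (x k) ∈ interior P := by rwa [hd.symm l (x k)]
  have t2 : ε - d (x k) c ∈ P := interior_subset hk1
  have t3 : d l (x k) + d (x k) c - d l c ∈ P := hd.triangle l c (x k)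
  have hsum : ((r + ε) - d l (x k)) + (ε - d (x k) c) + (d l (x k) + d (x k) c - d l c)
      ∈ interior P := hintadd _ _ (hintadd _ _ t1 t2) t3
  have heq : ((r + ε) - d l (x k)) + (ε - d (x k) c) + (d l (x k) + d (x k) c - d l c)
      = (ε + ε) - (d l c - r) := by abel
  rw [heq, hεε, sub_self] at hsum
  exact h0notint hsum
end

section
/- Let C be the set of all I-cluster points of a sequence {x_n} in a cone metric space (X,d), and let 0 ≪ r ∈ E be such that for every x ∈ X and every c ∈ C either d(x,c) ≤ r or r ≪ d(x,c). Then I-LIM^r x ⊆ ⋂_{c∈C} B̄_r(c) ⊆ {y ∈ X : C ⊆ B̄_r(y)}. -/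
open Set Pointwise

private lemma zero_not_mem_int {E : Type*} [NormedAddCommGroup E] [NormedSpace ℝ E]
    {P : Set E} (hc : IsCone P) : (0:E) ∉ interior P := by
  intro h0
  obtain ⟨z, hz, hz0⟩ : ∃ z ∈ P, z ≠ 0 := by
    by_contra h
    push_neg at h
    apply hc.ne_zero
    ext w
    simp only [Set.mem_singleton_iff]
    constructor
    · exact fun hw => h w hw
    · rintro rfl
      obtain ⟨y, hy⟩ := hc.nonempty
      have := h y hy
      subst this; exact hy
  have hnhds : P ∈ nhds (0:E) := mem_interior_iff_mem_nhds.mp h0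
  have htend : Filter.Tendsto (fun t : ℝ => t • (-z)) (nhds 0) (nhds 0) := by
    have := (continuous_id.smul continuous_const : Continuous fun t : ℝ => t • (-z)).tendsto 0
    have h' : Filter.Tendsto (fun t : ℝ => t • (-z)) (nhds 0) (nhds ((0:ℝ) • (-z))) := this
    rwa [zero_smul] at h'
  have hev : ∀ᶠ t : ℝ in nhds 0, t • (-z) ∈ P := htend.eventually_mem hnhds
  obtain ⟨t, ht, htpos⟩ : ∃ t : ℝ, t • (-z) ∈ P ∧ 0 < t := by
    obtain ⟨δ, hδ, hδP⟩ := Metric.eventually_nhds_iff.mp hev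
    refine ⟨δ/2, hδP ?_, half_pos hδ⟩
    rw [Real.dist_eq, sub_zero, abs_of_pos (half_pos hδ)]
    exact half_lt_self hδ
  have h1 : t • z ∈ P := by
    obtain ⟨y, hy⟩ := hc.nonempty
    have := hc.smul_add_mem t 0 htpos.le le_rfl z y hz hy
    simpa using this
  have h2 : -(t • z) ∈ P := by simpa [smul_neg] using ht
  have := hc.eq_zero_of_mem_neg_mem _ h1 h2
  exact hz0 (by simpa [smul_eq_zero, htpos.ne'] using this)

private lemma int_add_mem {E : Type*} [NormedAddCommGroup E] [NormedSpace ℝ E]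
    {P : Set E} (hc : IsCone P) {u p : E} (hu : u ∈ interior P) (hp : p ∈ P) :
    u + p ∈ interior P := by
  have hadd : ∀ a b : E, a ∈ P → b ∈ P → a + b ∈ P := fun a b ha hb => by
    have := hc.smul_add_mem 1 1 zero_le_one zero_le_one a b ha hb
    simpa using this
  have hopen : IsOpen ((fun v => v + p) '' interior P) :=
    (isOpenMap_add_right p) _ isOpen_interior
  have hsub : (fun v => v + p) '' interior P ⊆ P := by
    rintro _ ⟨v, hv, rfl⟩
    exact hadd v p (interior_subset hv) hp
  exact interior_maximal hsub hopen ⟨u, hu, rfl⟩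

theorem stmt12 {X E : Type*} [NormedAddCommGroup E] [NormedSpace ℝ E] [CompleteSpace E]
    (P : Set E) (d : X → X → E) (hd : IsConeMetric P d)
    (I : Set (Set ℕ)) (hI : AdmissibleIdeal I)
    (x : ℕ → X) (r : E) (hr : r ∈ interior P)
    (C : Set X) (hC : C = {c : X | IClusterPt P d I x c})
    (hdich : ∀ z : X, ∀ c ∈ C, r - d z c ∈ P ∨ d z c - r ∈ interior P) :
    {l : X | RoughIConv P d I x r l} ⊆ (⋂ c ∈ C, {z : X | r - d z c ∈ P}) ∧
      (⋂ c ∈ C, {z : X | r - d z c ∈ P}) ⊆ {y : X | C ⊆ {z : X | r - d z y ∈ P}} := by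
  constructor
  · intro l hl
    simp only [Set.mem_iInter]
    intro c hcC
    have hclu : IClusterPt P d I x c := by rw [hC] at hcC; exact hcC
    rcases hdich l c hcC with h | h
    · exact h
    exfalso
    set s : E := d l c - r with hs
    set ε : E := (1/2 : ℝ) • s with hεdef
    have hε : ε ∈ interior P := by
      have hsmulP : (1/2 : ℝ) • P ⊆ P := by
        rintro _ ⟨a, ha, rfl⟩
        obtain ⟨y, hy⟩ := hd.cone.nonempty
        have := hd.cone.smul_add_mem (1/2) 0 (by norm_num) le_rfl a y ha hy
        simpa using this
      have h1 : (1/2 : ℝ) • interior P = interior ((1/2 : ℝ) • P) :=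
        (interior_smul₀ (by norm_num : (1/2:ℝ) ≠ 0) P).symm
      have h2 : ε ∈ (1/2 : ℝ) • interior P := ⟨s, h, rfl⟩
      rw [h1] at h2
      exact interior_mono hsmulP h2
    have hA := hclu ε hε
    have hB := hl ε hε
    have hAB : ¬ ({k : ℕ | ε - d (x k) c ∈ interior P} ⊆
        {n : ℕ | (r + ε) - d (x n) l ∉ interior P}) := fun hsub =>
      hA (hI.subset_mem _ _ hsub hB)
    obtain ⟨k, hk1, hk2⟩ := Set.not_subset.mp hAB
    simp only [Set.mem_setOf_eq, not_not] at hk1 hk2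
    have h2ε : ε + ε = d l c - r := by
      rw [hεdef, ← add_smul]; norm_num; exact hs
    have hsum1 : (ε - d (x k) c) + ((r + ε) - d (x k) l) ∈ interior P :=
      int_add_mem hd.cone hk1 (interior_subset hk2)
    have hsum2 : ((ε - d (x k) c) + ((r + ε) - d (x k) l)) +
        (d l (x k) + d (x k) c - d l c) ∈ interior P :=
      int_add_mem hd.cone hsum1 (hd.triangle l c (x k))
    have hkey : ((ε - d (x k) c) + ((r + ε) - d (x k) l)) +
        (d l (x k) + d (x k) c - d l c) = 0 := by
      rw [hd.symm l (x k)]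
      calc (ε - d (x k) c) + ((r + ε) - d (x k) l) + (d (x k) l + d (x k) c - d l c)
          = (ε + ε) + (r - d l c) := by abel
        _ = 0 := by rw [h2ε]; abel
    rw [hkey] at hsum2
    exact zero_not_mem_int hd.cone hsum2
  · intro y hy
    simp only [Set.mem_setOf_eq]
    intro c hcC
    simp only [Set.mem_iInter] at hy
    have := hy c hcC
    simpa [hd.symm c y] using this
end

section
/- If a sequence {x_n} in a cone metric space (X,d) is rough I*-convergent of roughness degree r to x, then it is rough I-convergent of roughness degree r to x. -/
open Set

lemma adm_finite_lt {I : Set (Set ℕ)} (hI : AdmissibleIdeal I) (p : ℕ) :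
    {n : ℕ | n < p} ∈ I := by
  induction p with
  | zero =>
    exact hI.subset_mem {0} _ (by simp) (hI.singleton_mem 0)
  | succ p ih =>
    have : {n : ℕ | n < p + 1} = {n : ℕ | n < p} ∪ {p} := by
      ext n; simp [Nat.lt_succ_iff_lt_or_eq, or_comm]; exact le_iff_eq_or_lt
    rw [this]
    exact hI.union_mem _ _ ih (hI.singleton_mem p)

theorem stmt13 {X E : Type*} [NormedAddCommGroup E] [NormedSpace ℝ E] [CompleteSpace E]
    (P : Set E) (d : X → X → E) (hd : IsConeMetric P d)
    (I : Set (Set ℕ)) (hI : AdmissibleIdeal I)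
    (x : ℕ → X) (r : E) (l : X)
    (h : RoughIStarConv P d I x r l) : RoughIConv P d I x r l := by
  obtain ⟨M, hMc, hM⟩ := h
  intro ε hε
  obtain ⟨p, hp⟩ := hM ε hε
  apply hI.subset_mem (Mᶜ ∪ {n : ℕ | n < p})
  · intro n hn
    by_contra hcon
    simp only [Set.mem_union, Set.mem_compl_iff, Set.mem_setOf_eq] at hcon
    push_neg at hcon
    exact hn (hp n hcon.1 hcon.2)
  · exact hI.union_mem _ _ hMc (adm_finite_lt hI p)
end

section
/- Let I be an admissible ideal on ℕ satisfying the (AP) condition. If a sequence {x_n} in a cone metric space (X,d) is rough I-convergent of roughness degree r to x*, then it is rough I*-convergent of roughness degree r to x*. -/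
open Set

theorem stmt14 {X E : Type*} [NormedAddCommGroup E] [NormedSpace ℝ E] [CompleteSpace E]
    (P : Set E) (d : X → X → E) (hd : IsConeMetric P d)
    (I : Set (Set ℕ)) (hI : AdmissibleIdeal I) (hAP : HasAP I)
    (x : ℕ → X) (r : E) (xstar : X)
    (h : RoughIConv P d I x r xstar) : RoughIStarConv P d I x r xstar := by
  classical
  obtain ⟨e₀, he₀⟩ := hd.intP_nonempty
  have hP := hd.cone
  have haddP : ∀ a b : E, a ∈ P → b ∈ P → a + b ∈ P := fun a b ha hb => by
    simpa using hP.smul_add_mem 1 1 zero_le_one zero_le_one a b ha hb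
  have hsmulP : ∀ (c : ℝ) (a : E), 0 ≤ c → a ∈ P → c • a ∈ P := fun c a hc ha => by
    simpa using hP.smul_add_mem c 0 hc le_rfl a a ha ha
  have hmemint : ∀ p q : E, p ∈ P → q ∈ interior P → p + q ∈ interior P := by
    intro p q hp hq
    have hop : IsOpen ((p + ·) '' interior P) :=
      (Homeomorph.addLeft p).isOpenMap _ isOpen_interior
    have hsub : ((p + ·) '' interior P) ⊆ P := by
      rintro _ ⟨y, hy, rfl⟩; exact haddP p y hp (interior_subset hy)
    exact interior_maximal hsub hop ⟨q, hq, rfl⟩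
  have hsmulint : ∀ (c : ℝ), 0 < c → ∀ a ∈ interior P, c • a ∈ interior P := by
    intro c hc a ha
    have hop : IsOpen ((c • ·) '' interior P) :=
      (isOpenMap_smul₀ (ne_of_gt hc)) _ isOpen_interior
    have hsub : ((c • ·) '' interior P) ⊆ P := by
      rintro _ ⟨y, hy, rfl⟩; exact hsmulP c y hc.le (interior_subset hy)
    exact interior_maximal hsub hop ⟨a, ha, rfl⟩
  set eps : ℕ → E := fun i => (1 / ((i : ℝ) + 1)) • e₀ with heps
  have heps_mem : ∀ i, eps i ∈ interior P := fun i =>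
    hsmulint _ (by positivity) e₀ he₀
  set C : ℕ → Set ℕ := fun i => {n | r + eps i - d (x n) xstar ∉ interior P} with hC
  have hCI : ∀ i, C i ∈ I := fun i => h (eps i) (heps_mem i)
  have hCmono : ∀ i, C i ⊆ C (i + 1) := by
    intro i n hn
    simp only [hC, Set.mem_setOf_eq] at hn ⊢
    intro hmem
    apply hn
    have hdiff : eps i - eps (i + 1) ∈ P := by
      have heq : eps i - eps (i + 1) = (1 / ((i : ℝ) + 1) - 1 / ((i : ℝ) + 2)) • e₀ := by
        simp only [heps, sub_smul]
        push_cast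
        ring_nf
      rw [heq]
      apply hsmulP
      · have h1 : (1 : ℝ) / ((i : ℝ) + 2) ≤ 1 / ((i : ℝ) + 1) := by
          apply one_div_le_one_div_of_le <;> [positivity; linarith]
        linarith
      · exact interior_subset he₀
    have := hmemint _ _ hdiff hmem
    have heq2 : eps i - eps (i + 1) + (r + eps (i + 1) - d (x n) xstar)
        = r + eps i - d (x n) xstar := by abel
    rwa [heq2] at this
  have hCmono' : ∀ i j, i ≤ j → C i ⊆ C j := by
    intro i j hij
    induction j with
    | zero => simp_all
    | succ k ih =>
      rcases Nat.lt_or_ge i (k + 1) with hk | hk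
      · exact (ih (by omega)).trans (hCmono k)
      · have : i = k + 1 := by omega
        subst this; exact subset_rfl
  set A : ℕ → Set ℕ := fun i => match i with
    | 0 => C 0
    | (k + 1) => C (k + 1) \ C k with hA
  have hAsub : ∀ i, A i ⊆ C i := by
    intro i
    match i with
    | 0 => exact subset_rfl
    | (k + 1) => exact Set.diff_subset
  have hAI : ∀ i, A i ∈ I := by
    intro i
    match i with
    | 0 => exact hCI 0
    | (k + 1) => exact hI.subset_mem (C (k + 1)) _ Set.diff_subset (hCI (k + 1))
  have hAdisj : ∀ i j, i ≠ j → Disjoint (A i) (A j) := by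
    have key : ∀ i j, i < j → Disjoint (A i) (A j) := by
      intro i j hij
      obtain ⟨k, rfl⟩ : ∃ k, j = k + 1 := ⟨j - 1, by omega⟩
      rw [Set.disjoint_left]
      intro n hni hnj
      have hcik : n ∈ C k := hCmono' i k (by omega) (hAsub i hni)
      exact hnj.2 hcik
    intro i j hij
    rcases lt_or_gt_of_ne hij with hlt | hlt
    · exact key i j hlt
    · exact (key j i hlt).symm
  obtain ⟨B, hfinB, hUB⟩ := hAP A hAI hAdisj
  refine ⟨(⋃ j, B j)ᶜ, by simpa using hUB, ?_⟩
  intro ε hε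
  have htend : Filter.Tendsto (fun i : ℕ => ε - eps i) Filter.atTop (nhds ε) := by
    have h1 : Filter.Tendsto (fun i : ℕ => 1 / ((i : ℝ) + 1)) Filter.atTop (nhds 0) :=
      tendsto_one_div_add_atTop_nhds_zero_nat
    have h2 := h1.smul_const e₀
    simpa [heps] using Filter.Tendsto.const_sub ε h2
  obtain ⟨i, hi⟩ := (htend.eventually (isOpen_interior.mem_nhds hε)).exists
  have hS : (⋃ j ∈ Finset.range (i + 1), symmDiff (A j) (B j)).Finite :=
    Set.Finite.biUnion (Finset.range (i + 1)).finite_toSet (fun j _ => hfinB j)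
  obtain ⟨p, hp⟩ := hS.bddAbove
  refine ⟨p + 1, ?_⟩
  intro n hnM hnp
  have hnB : ∀ j, n ∉ B j := fun j hj => hnM (Set.mem_iUnion.2 ⟨j, hj⟩)
  have hnA : ∀ j, j ≤ i → n ∉ A j := by
    intro j hj hnAj
    have hsym : n ∈ symmDiff (A j) (B j) := Set.mem_symmDiff.2 (Or.inl ⟨hnAj, hnB j⟩)
    have hnS : n ∈ ⋃ j ∈ Finset.range (i + 1), symmDiff (A j) (B j) := by
      exact Set.mem_biUnion (Finset.mem_range.2 (by omega)) hsym
    have := hp hnS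
    omega
  have hnC : ∀ m, m ≤ i → n ∉ C m := by
    intro m hm
    induction m with
    | zero => exact hnA 0 (Nat.zero_le _)
    | succ k ih =>
      intro hc
      by_cases hk : n ∈ C k
      · exact ih (by omega) hk
      · exact hnA (k + 1) hm ⟨hc, hk⟩
  have hmem : r + eps i - d (x n) xstar ∈ interior P := by
    have := hnC i le_rfl
    simp only [hC, Set.mem_setOf_eq] at this
    exact not_not.mp this
  have hfin := hmemint (ε - eps i) (r + eps i - d (x n) xstar) (interior_subset hi) hmem
  have heq : ε - eps i + (r + eps i - d (x n) xstar) = r + ε - d (x n) xstar := by abel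
  rwa [heq] at hfin
end

section
/- Let (X,d) be a cone metric space with normal cone P of normal constant K, and let I be an admissible ideal on ℕ with the (AP) property. Suppose {d(x_n,x) − r} is a sequence in P. Then {x_n} is rough I-convergent of roughness degree r to x if and only if the sequence {d(x_n,x) − r} in E is I-convergent to 0 (in norm). -/
open Set

open Pointwise in
theorem stmt18 {X E : Type*} [NormedAddCommGroup E] [NormedSpace ℝ E] [CompleteSpace E]
    (P : Set E) (d : X → X → E) (hd : IsConeMetric P d)
    (K : ℝ) (hK : IsNormalConeWith P K)
    (I : Set (Set ℕ)) (hI : AdmissibleIdeal I) (hAP : HasAP I)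
    (x : ℕ → X) (l : X) (r : E) (hseq : ∀ n : ℕ, d (x n) l - r ∈ P) :
    RoughIConv P d I x r l ↔
      ∀ ε : ℝ, 0 < ε → {n : ℕ | ε ≤ ‖d (x n) l - r‖} ∈ I := by
  constructor
  · intro h ε hε
    obtain ⟨e, he⟩ := hd.intP_nonempty
    have hK0 := hK.1
    have hepos : (0:ℝ) < ‖e‖ + 1 := by positivity
    set t : ℝ := ε / (2 * K * (‖e‖ + 1)) with ht
    have htpos : 0 < t := by positivity
    have hte : t • e ∈ interior P := by
      have hsub : t • P ⊆ P := by
        rintro _ ⟨p, hp, rfl⟩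
        have := hd.cone.smul_add_mem t 0 htpos.le le_rfl p p hp hp
        simpa using this
      have : t • e ∈ interior (t • P) := by
        rw [interior_smul₀ htpos.ne' P]
        exact smul_mem_smul_set he
      exact interior_mono hsub this
    have h1 := h (t • e) hte
    apply hI.subset_mem _ _ _ h1
    intro n hn
    simp only [Set.mem_setOf_eq] at hn ⊢
    intro hmem
    have hxP : (r + t • e) - d (x n) l ∈ P := interior_subset hmem
    have hnorm : ‖d (x n) l - r‖ ≤ K * ‖t • e‖ := by
      apply hK.2 _ _ (hseq n)
      have heq : t • e - (d (x n) l - r) = (r + t • e) - d (x n) l := by abel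
      rw [heq]; exact hxP
    have hlt : K * ‖t • e‖ < ε := by
      rw [norm_smul, Real.norm_of_nonneg htpos.le]
      have h2 : K * (t * ‖e‖) ≤ K * (t * (‖e‖ + 1)) := by nlinarith
      have h3 : K * (t * (‖e‖ + 1)) = ε / 2 := by
        rw [ht]; field_simp
      linarith
    linarith [hn.trans hnorm]
  · intro h ε hε
    obtain ⟨δ, hδ, hball⟩ := Metric.isOpen_iff.mp isOpen_interior ε hε
    apply hI.subset_mem _ _ _ (h δ hδ)
    intro n hn
    simp only [Set.mem_setOf_eq] at hn ⊢
    by_contra hlt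
    push_neg at hlt
    apply hn
    apply hball
    rw [Metric.mem_ball, dist_eq_norm]
    have heq : (r + ε) - d (x n) l - ε = -(d (x n) l - r) := by abel
    rw [heq, norm_neg]
    exact hlt
end

section
/- Let (X,d) be a cone metric space with normal cone P of normal constant K. Suppose {x_n} and {y_n} are sequences in X that are rough I-convergent of roughness degree r/(4K+2) to x and y respectively (for some 0 ≪ r ∈ E). Then the sequence {z_n} in E given by z_n = d(x_n,y_n) is rough I-convergent of roughness degree ‖r‖ to d(x,y), i.e., for every real ε > 0, the set {n ∈ ℕ : ‖d(x_n,y_n) − d(x,y)‖ ≥ ε + ‖r‖} belongs to I. -/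
open Set

open Pointwise in
private lemma normal_sandwich {E : Type*} [NormedAddCommGroup E] [NormedSpace ℝ E]
    (P : Set E) (K : ℝ) (hK0 : 0 < K)
    (hKn : ∀ x y : E, x ∈ P → y - x ∈ P → ‖x‖ ≤ K * ‖y‖)
    (a c : E) (h1 : c - a ∈ P) (h2 : c + a ∈ P) : ‖a‖ ≤ (2 * K + 1) * ‖c‖ := by
  have h3 : ‖c + a‖ ≤ K * ‖c + c‖ := by
    refine hKn _ (c + c) h2 ?_
    have : c + c - (c + a) = c - a := by abel
    rw [this]; exact h1
  have h4 : ‖c + c‖ ≤ ‖c‖ + ‖c‖ := norm_add_le c c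
  have h5 : ‖a‖ ≤ ‖c + a‖ + ‖c‖ := by
    have := norm_sub_le (c + a) c
    simpa using this
  nlinarith [norm_nonneg c]

open Pointwise in
private lemma smul_mem_interior' {E : Type*} [NormedAddCommGroup E] [NormedSpace ℝ E]
    (P : Set E) (hP : ∀ a : ℝ, 0 ≤ a → ∀ p ∈ P, a • p ∈ P)
    (t : ℝ) (ht : 0 < t) (e : E) (he : e ∈ interior P) : t • e ∈ interior P := by
  have hPsmul : t • P ⊆ P := by
    rintro _ ⟨p, hp, rfl⟩
    exact hP t ht.le p hp
  have h2 : t • e ∈ interior (t • P) := by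
    rw [interior_smul₀ (ne_of_gt ht)]
    exact ⟨e, he, rfl⟩
  exact interior_mono hPsmul h2

theorem stmt19 {X E : Type*} [NormedAddCommGroup E] [NormedSpace ℝ E] [CompleteSpace E]
    (P : Set E) (d : X → X → E) (hd : IsConeMetric P d)
    (K : ℝ) (hK : IsNormalConeWith P K)
    (I : Set (Set ℕ)) (hI : AdmissibleIdeal I)
    (x y : ℕ → X) (lx ly : X) (r : E) (hr : r ∈ interior P)
    (hx : RoughIConv P d I x ((4 * K + 2)⁻¹ • r) lx)
    (hy : RoughIConv P d I y ((4 * K + 2)⁻¹ • r) ly) :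
    ∀ ε : ℝ, 0 < ε →
      {n : ℕ | ε + ‖r‖ ≤ ‖d (x n) (y n) - d lx ly‖} ∈ I := by
  intro ε hε
  obtain ⟨hK0, hKn⟩ := hK
  have hKd : (0:ℝ) < 4 * K + 2 := by linarith
  obtain ⟨e, he⟩ := hd.intP_nonempty
  have hepos : (0:ℝ) < ‖e‖ + 1 := by positivity
  set t : ℝ := ε / ((4 * K + 2) * (‖e‖ + 1)) with ht
  have htpos : 0 < t := by positivity
  have hε'mem : t • e ∈ interior P :=
    smul_mem_interior' P
      (fun a ha p hp => by simpa using hd.cone.smul_add_mem a 0 ha le_rfl p p hp hp)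
      t htpos e he
  have hε'norm : (4 * K + 2) * ‖t • e‖ < ε := by
    have h1 : ‖t • e‖ = t * ‖e‖ := by
      rw [norm_smul, Real.norm_of_nonneg htpos.le]
    have key : (4 * K + 2) * (‖e‖ + 1) * t = ε := by
      rw [ht]; field_simp
    rw [h1]
    nlinarith [norm_nonneg e]
  have hPadd : ∀ u v : E, u ∈ P → v ∈ P → u + v ∈ P := fun u v hu hv => by
    simpa using hd.cone.smul_add_mem 1 1 zero_le_one zero_le_one u v hu hv
  have hA := hx (t • e) hε'mem
  have hB := hy (t • e) hε'mem
  refine hI.subset_mem _ _ ?_ (hI.union_mem _ _ hA hB)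
  intro n hn
  simp only [Set.mem_setOf_eq] at hn
  by_contra hcon
  simp only [Set.mem_union, Set.mem_setOf_eq, not_or, not_not] at hcon
  obtain ⟨hgx, hgy⟩ := hcon
  have hgx' : ((4 * K + 2)⁻¹ • r + t • e) - d (x n) lx ∈ P := interior_subset hgx
  have hgy' : ((4 * K + 2)⁻¹ • r + t • e) - d (y n) ly ∈ P := interior_subset hgy
  set c : E := ((4 * K + 2)⁻¹ • r + t • e) + ((4 * K + 2)⁻¹ • r + t • e) with hc
  set a : E := d (x n) (y n) - d lx ly with ha
  have hcma : c - a ∈ P := by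
    have hid : c - a = (((4 * K + 2)⁻¹ • r + t • e) - d (x n) lx)
        + (((4 * K + 2)⁻¹ • r + t • e) - d (y n) ly)
        + (d (x n) lx + d lx (y n) - d (x n) (y n))
        + (d lx ly + d ly (y n) - d lx (y n)) := by
      rw [hc, ha, hd.symm ly (y n)]; abel
    rw [hid]
    exact hPadd _ _ (hPadd _ _ (hPadd _ _ hgx' hgy') (hd.triangle (x n) (y n) lx))
      (hd.triangle lx (y n) ly)
  have hcpa : c + a ∈ P := by
    have hid : c + a = (((4 * K + 2)⁻¹ • r + t • e) - d (x n) lx)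
        + (((4 * K + 2)⁻¹ • r + t • e) - d (y n) ly)
        + (d lx (x n) + d (x n) ly - d lx ly)
        + (d (x n) (y n) + d (y n) ly - d (x n) ly) := by
      rw [hc, ha, hd.symm lx (x n)]; abel
    rw [hid]
    exact hPadd _ _ (hPadd _ _ (hPadd _ _ hgx' hgy') (hd.triangle lx ly (x n)))
      (hd.triangle (x n) ly (y n))
  have hbound : ‖a‖ ≤ (2 * K + 1) * ‖c‖ := normal_sandwich P K hK0 hKn a c hcma hcpa
  have hcnorm : ‖c‖ ≤ 2 * ((4 * K + 2)⁻¹ * ‖r‖ + ‖t • e‖) := by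
    have h1 : ‖(4 * K + 2)⁻¹ • r‖ = (4 * K + 2)⁻¹ * ‖r‖ := by
      rw [norm_smul, Real.norm_of_nonneg (inv_nonneg.mpr hKd.le)]
    calc ‖c‖ ≤ ‖(4 * K + 2)⁻¹ • r + t • e‖ + ‖(4 * K + 2)⁻¹ • r + t • e‖ := norm_add_le _ _
      _ ≤ 2 * (‖(4 * K + 2)⁻¹ • r‖ + ‖t • e‖) := by
          have := norm_add_le ((4 * K + 2)⁻¹ • r) (t • e); linarith
      _ = 2 * ((4 * K + 2)⁻¹ * ‖r‖ + ‖t • e‖) := by rw [h1]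
  have hinv : (4 * K + 2) * (4 * K + 2)⁻¹ = 1 := mul_inv_cancel₀ (ne_of_gt hKd)
  have hfinal : ‖a‖ < ε + ‖r‖ := by
    have h2 : (2 * K + 1) * ‖c‖ ≤ ‖r‖ + (4 * K + 2) * ‖t • e‖ := by
      have h3 : (2 * K + 1) * (2 * ((4 * K + 2)⁻¹ * ‖r‖ + ‖t • e‖))
          = ‖r‖ + (4 * K + 2) * ‖t • e‖ := by
        have h0 : (2 * K + 1) * 2 * (4 * K + 2)⁻¹ = 1 := by
          rw [show (2 * K + 1) * 2 = 4 * K + 2 by ring]; exact hinv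
        calc (2 * K + 1) * (2 * ((4 * K + 2)⁻¹ * ‖r‖ + ‖t • e‖))
            = ((2 * K + 1) * 2 * (4 * K + 2)⁻¹) * ‖r‖ + (4 * K + 2) * ‖t • e‖ := by ring
          _ = ‖r‖ + (4 * K + 2) * ‖t • e‖ := by rw [h0, one_mul]
      nlinarith [norm_nonneg (t • e), norm_nonneg r]
    linarith
  rw [ha] at hfinal
  linarith
end
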